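/- arXiv:1912.10077 — 7 statements merged into one kernel-verified Lean document; each statement's English description precedes it below -/
import Mathlib

section
/- Let d ≥ 1, n ≥ 2, 1 ≤ p < ∞, and let f : ℝ^{d×n} → ℝ^{d×n} be continuous, permutation equivariant, and supported in [0,1]^{d×n}. Then for every ε > 0 there exists δ > 0 with 1/δ ∈ ℕ such that the piecewise constant function f̄(X) = Σ_{L ∈ G_δ} f(C_L) 1{X ∈ S_L}, where C_L ∈ S_L is the center point of the cube S_L, is permutation equivariant and satisfies d_p(f, f̄) ≤ ε. -/
open MeasureTheory Matrix Filter
open scoped Classical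

noncomputable section

/-- `d × n` real matrices: an input sequence of `n` tokens with embedding dimension `d`. -/
abbrev Mat (d n : ℕ) := Matrix (Fin d) (Fin n) ℝ
/-- Lebesgue (product) measure on `d × n` matrices. -/
instance (d n : ℕ) : MeasureSpace (Mat d n) :=
  inferInstanceAs (MeasureSpace (Fin d → Fin n → ℝ))
/-- `d_p(f₁,f₂) = (∫ ‖f₁(X) − f₂(X)‖_p^p dX)^{1/p}` with the entry-wise `ℓ^p` norm,
valued in `ℝ≥0∞`. -/
def lpDist {d n : ℕ} (p : ℝ) (f g : Mat d n → Mat d n) : ENNReal :=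
  (∫⁻ X : Mat d n, ENNReal.ofReal (∑ i, ∑ j, |f X i j - g X i j| ^ p)) ^ (1 / p)
/-- `f` is permutation equivariant: `f(XP) = f(X)P` for every permutation matrix `P`. -/
def PermEquivariant {d n : ℕ} (f : Mat d n → Mat d n) : Prop :=
  ∀ (X : Mat d n) (π : Equiv.Perm (Fin n)), f (X * π.permMatrix ℝ) = f X * π.permMatrix ℝ

/-!
On the half-open cube `[0,1)^{d×n}` the grid approximation is `f ∘ q`, where `q` replaces every
entry by the centre of its grid cell, and it vanishes elsewhere. Since `q` acts entrywise and the
half-open cube is stable under column permutations, equivariance of `f` passes to `f ∘ q`.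
For the distance: `f` is continuous with compact support, hence uniformly continuous, so once the
mesh `1/N` is below its modulus every entry of `f - f̄` is at most `η` on the cube; off the
half-open cube both vanish, because the open set `support f` lies in the interior `(0,1)^{d×n}`.
Integrating over a cube of volume one gives `d_p(f, f̄) ≤ (dn)^{1/p} η`.
-/
open Set Function

-- The centre of the cell containing `x` only when `x ≥ 0`: below `0` the floor is truncated.
def gridCenter (N : ℕ) (x : ℝ) : ℝ := ⌊x * N⌋₊ * (N : ℝ)⁻¹ + (N : ℝ)⁻¹ / 2

def unitCubeIco (d n : ℕ) : Set (Mat d n) := {X | ∀ i j, X i j ∈ Ico 0 1}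

def gridApprox {d n : ℕ} (N : ℕ) (f : Mat d n → Mat d n) (X : Mat d n) : Mat d n :=
  ∑ κ : Fin d → Fin n → Fin N,
    if (∀ i j, ((κ i j : ℕ) : ℝ) * ((N:ℝ)⁻¹) ≤ X i j ∧
          X i j < ((κ i j : ℕ) : ℝ) * ((N:ℝ)⁻¹) + (N:ℝ)⁻¹) then
      f (Matrix.of fun i j => ((κ i j : ℕ) : ℝ) * ((N:ℝ)⁻¹) + (N:ℝ)⁻¹ / 2)
    else 0

lemma mem_gridCell_iff {N : ℕ} (hN : 0 < N) {x : ℝ} {k : ℕ} :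
    (k * (N : ℝ)⁻¹ ≤ x ∧ x < k * (N : ℝ)⁻¹ + (N : ℝ)⁻¹) ↔ 0 ≤ x ∧ ⌊x * N⌋₊ = k := by
  have hN' : (0 : ℝ) < N := by exact_mod_cast hN
  constructor
  · rintro ⟨hlo, hhi⟩
    have hx : 0 ≤ x := le_trans (by positivity) hlo
    refine ⟨hx, (Nat.floor_eq_iff (by positivity)).2 ⟨?_, ?_⟩⟩
    · rwa [← div_eq_mul_inv, div_le_iff₀ hN'] at hlo
    · rwa [← add_one_mul, ← div_eq_mul_inv, lt_div_iff₀ hN'] at hhi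
  · rintro ⟨hx, rfl⟩
    have hlo := Nat.floor_le (mul_nonneg hx hN'.le)
    have hhi := Nat.lt_floor_add_one (x * N)
    refine ⟨?_, ?_⟩
    · rwa [← div_eq_mul_inv, div_le_iff₀ hN']
    · rwa [← add_one_mul, ← div_eq_mul_inv, lt_div_iff₀ hN']

lemma abs_sub_gridCenter_le {N : ℕ} (hN : 0 < N) {x : ℝ} (hx : 0 ≤ x) :
    |x - gridCenter N x| ≤ (N : ℝ)⁻¹ / 2 := by
  obtain ⟨hlo, hhi⟩ := (mem_gridCell_iff hN (k := ⌊x * N⌋₊)).2 ⟨hx, rfl⟩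
  rw [gridCenter, abs_le]
  constructor <;> linarith

lemma gridApprox_eq_indicator {d n N : ℕ} (hN : 0 < N) (f : Mat d n → Mat d n) :
    gridApprox N f = (unitCubeIco d n).indicator fun X => f (X.map (gridCenter N)) := by
  funext X
  have hcell : ∀ κ : Fin d → Fin n → Fin N,
      (∀ i j, ((κ i j : ℕ) : ℝ) * ((N:ℝ)⁻¹) ≤ X i j ∧
          X i j < ((κ i j : ℕ) : ℝ) * ((N:ℝ)⁻¹) + (N:ℝ)⁻¹) ↔
        ∀ i j, 0 ≤ X i j ∧ ⌊X i j * N⌋₊ = κ i j :=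
    fun κ => forall₂_congr fun i j => mem_gridCell_iff hN
  simp only [gridApprox, hcell]
  by_cases hX : X ∈ unitCubeIco d n
  · have hlt : ∀ i j, ⌊X i j * N⌋₊ < N := fun i j =>
      (Nat.floor_lt (mul_nonneg (hX i j).1 (Nat.cast_nonneg N))).2
        (by nlinarith [(hX i j).2, (Nat.cast_pos.2 hN : (0 : ℝ) < N)])
    let κ₀ : Fin d → Fin n → Fin N := fun i j => ⟨⌊X i j * N⌋₊, hlt i j⟩
    have hκ : ∀ κ : Fin d → Fin n → Fin N, (∀ i j, 0 ≤ X i j ∧ ⌊X i j * N⌋₊ = κ i j) ↔ κ₀ = κ :=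
      fun κ => ⟨fun h => funext₂ fun i j => Fin.ext (h i j).2,
        fun h i j => ⟨(hX i j).1, by rw [← h]⟩⟩
    simp only [hκ, Finset.sum_ite_eq, Finset.mem_univ, if_true, indicator_of_mem hX]
    rfl
  · rw [indicator_of_notMem hX]
    refine Finset.sum_eq_zero fun κ _ => if_neg fun h => hX fun i j => ⟨(h i j).1, ?_⟩
    have := (Nat.floor_lt (mul_nonneg (h i j).1 (Nat.cast_nonneg N))).1 ((h i j).2 ▸ (κ i j).2)
    have hN' : (0 : ℝ) < N := by exact_mod_cast hN
    nlinarith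

lemma mul_permMatrix_eq_submatrix {R : Type*} [NonAssocSemiring R] {m n : Type*} [Fintype n]
    [DecidableEq n] (X : Matrix m n R) (σ : Equiv.Perm n) :
    X * σ.permMatrix R = X.submatrix id σ.symm :=
  PEquiv.mul_toMatrix_toPEquiv X σ

section PermEquivariant

variable {d n : ℕ}

lemma PermEquivariant.comp {f g : Mat d n → Mat d n} (hf : PermEquivariant f)
    (hg : PermEquivariant g) : PermEquivariant (f ∘ g) := fun X σ => by
  simp only [Function.comp_apply, hg X σ, hf _ σ]

lemma permEquivariant_map (g : ℝ → ℝ) : PermEquivariant fun X : Mat d n => X.map g :=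
  fun X σ => by simp only [mul_permMatrix_eq_submatrix, Matrix.submatrix_map]

lemma PermEquivariant.indicator {f : Mat d n → Mat d n} {s : Set (Mat d n)}
    (hf : PermEquivariant f) (hs : ∀ X (σ : Equiv.Perm (Fin n)), X * σ.permMatrix ℝ ∈ s ↔ X ∈ s) :
    PermEquivariant (s.indicator f) := fun X σ => by
  by_cases hX : X ∈ s
  · rw [indicator_of_mem ((hs X σ).2 hX), indicator_of_mem hX, hf]
  · rw [indicator_of_notMem (mt (hs X σ).1 hX), indicator_of_notMem hX, Matrix.zero_mul]

lemma mul_permMatrix_mem_unitCubeIco_iff (X : Mat d n) (σ : Equiv.Perm (Fin n)) :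
    X * σ.permMatrix ℝ ∈ unitCubeIco d n ↔ X ∈ unitCubeIco d n := by
  simp only [unitCubeIco, mem_ofPred_eq, mul_permMatrix_eq_submatrix, Matrix.submatrix_apply, id]
  exact ⟨fun h i j => by simpa using h i (σ j), fun h i j => h i _⟩

lemma permEquivariant_gridApprox {N : ℕ} (hN : 0 < N) {f : Mat d n → Mat d n}
    (hf : PermEquivariant f) : PermEquivariant (gridApprox N f) := by
  rw [gridApprox_eq_indicator hN]
  exact (hf.comp (permEquivariant_map _)).indicator mul_permMatrix_mem_unitCubeIco_iff

end PermEquivariant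

section Analysis

variable {d n : ℕ}

lemma setOf_forall_mem_eq_pi {ι κ α : Type*} (s : Set α) :
    {x : ι → κ → α | ∀ i j, x i j ∈ s} = univ.pi fun _ => univ.pi fun _ => s := by
  ext x
  simp only [mem_ofPred_eq, mem_univ_pi]

lemma volume_unitCubeIco : volume (unitCubeIco d n) = 1 := by
  change (volume : Measure (Fin d → Fin n → ℝ)) {x | ∀ i j, x i j ∈ Ico 0 1} = 1
  rw [setOf_forall_mem_eq_pi]
  simp only [volume_pi_pi, Real.volume_Ico, sub_zero, ENNReal.ofReal_one, Finset.prod_const_one]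

lemma eq_zero_of_notMem_unitCubeIco {f : Mat d n → Mat d n} (hcont : Continuous f)
    (hsupp : support f ⊆ {X : Mat d n | ∀ i j, X i j ∈ Icc (0 : ℝ) 1}) {X : Mat d n}
    (hX : X ∉ unitCubeIco d n) : f X = 0 := by
  let F : (Fin d → Fin n → ℝ) → Fin d → Fin n → ℝ := f
  have hint : support F ⊆ interior {x | ∀ i j, x i j ∈ Icc 0 1} :=
    interior_maximal hsupp (show Continuous F from hcont).isOpen_support
  simp only [setOf_forall_mem_eq_pi, interior_pi_set finite_univ, interior_Icc] at hint
  by_contra hfX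
  exact hX fun i j => Ioo_subset_Ico_self (mem_univ_pi.1 (mem_univ_pi.1 (hint hfX) i) j)

lemma hasCompactSupport_of_support_subset_unitCube {f : Mat d n → Mat d n}
    (hsupp : support f ⊆ {X : Mat d n | ∀ i j, X i j ∈ Icc (0 : ℝ) 1}) : HasCompactSupport f := by
  refine .intro (K := {X : Mat d n | ∀ i j, X i j ∈ Icc (0 : ℝ) 1}) ?_
    fun X hX => notMem_support.1 (mt (@hsupp X) hX)
  change IsCompact {x : Fin d → Fin n → ℝ | ∀ i j, x i j ∈ Icc 0 1}
  rw [setOf_forall_mem_eq_pi]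
  exact isCompact_univ_pi fun _ => isCompact_univ_pi fun _ => isCompact_Icc

lemma HasCompactSupport.exists_pos_entrywise_modulus {f : Mat d n → Mat d n}
    (hf : HasCompactSupport f) (hcont : Continuous f) {η : ℝ} (hη : 0 < η) :
    ∃ ρ > 0, ∀ X Y : Mat d n, (∀ i j, |X i j - Y i j| < ρ) → ∀ i j, |f X i j - f Y i j| < η := by
  let F : (Fin d → Fin n → ℝ) → Fin d → Fin n → ℝ := f
  obtain ⟨ρ, hρ, hF⟩ := Metric.uniformContinuous_iff.1
    ((show HasCompactSupport F from hf).uniformContinuous_of_continuous hcont) η hη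
  refine ⟨ρ, hρ, fun X Y hXY i j => ?_⟩
  have hdist : dist (F X) (F Y) < η :=
    hF ((dist_pi_lt_iff hρ).2 fun i => (dist_pi_lt_iff hρ).2 fun j => hXY i j)
  calc |f X i j - f Y i j| = dist (F X i j) (F Y i j) := (Real.dist_eq _ _).symm
    _ ≤ dist (F X) (F Y) := (dist_le_pi_dist _ _ j).trans (dist_le_pi_dist _ _ i)
    _ < η := hdist

lemma lpDist_le_of_abs_sub_le {p : ℝ} (hp : 0 < p) {f g : Mat d n → Mat d n}
    {K : Set (Mat d n)} (hK : volume K ≤ 1) {η : ℝ} (hη : 0 ≤ η)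
    (hout : ∀ X ∉ K, f X = g X) (hin : ∀ X ∈ K, ∀ i j, |f X i j - g X i j| ≤ η) :
    lpDist p f g ≤ ENNReal.ofReal ((d * n : ℝ) ^ (1 / p) * η) := by
  have hpoint : ∀ X, ENNReal.ofReal (∑ i, ∑ j, |f X i j - g X i j| ^ p) ≤
      K.indicator (fun _ => ENNReal.ofReal (d * n * η ^ p)) X := by
    intro X
    by_cases hX : X ∈ K
    · rw [indicator_of_mem hX]
      refine ENNReal.ofReal_le_ofReal ?_
      calc ∑ i, ∑ j, |f X i j - g X i j| ^ p ≤ ∑ _i : Fin d, ∑ _j : Fin n, η ^ p :=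
            Finset.sum_le_sum fun i _ => Finset.sum_le_sum fun j _ =>
              Real.rpow_le_rpow (abs_nonneg _) (hin X hX i j) hp.le
        _ = d * n * η ^ p := by
          simp only [Finset.sum_const, Finset.card_univ, Fintype.card_fin, nsmul_eq_mul]
          ring
    · simp [hout X hX, Real.zero_rpow hp.ne']
  calc lpDist p f g
      ≤ (ENNReal.ofReal (d * n * η ^ p) * volume K) ^ (1 / p) :=
        ENNReal.rpow_le_rpow ((lintegral_mono hpoint).trans (lintegral_indicator_const_le _ _))
          (by positivity)
    _ ≤ ENNReal.ofReal (d * n * η ^ p) ^ (1 / p) :=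
        ENNReal.rpow_le_rpow (mul_le_of_le_one_right' hK) (by positivity)
    _ = ENNReal.ofReal ((d * n : ℝ) ^ (1 / p) * η) := by
        rw [ENNReal.ofReal_rpow_of_nonneg (by positivity) (by positivity),
          Real.mul_rpow (by positivity) (by positivity), one_div,
          Real.rpow_rpow_inv hη hp.ne']

end Analysis

theorem stmt_4_general (d n : ℕ) (p : ℝ) (hp : 1 ≤ p)
    (ε : ℝ) (hε : 0 < ε) (f : Mat d n → Mat d n)
    (hcont : Continuous f) (hequiv : PermEquivariant f)
    (hsupp : Function.support f ⊆ {X : Mat d n | ∀ i j, X i j ∈ Set.Icc (0:ℝ) 1}) :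
    ∃ N : ℕ, 1 ≤ N ∧
      ∀ fbar : Mat d n → Mat d n,
        (fbar = fun X => ∑ κ : Fin d → Fin n → Fin N,
          if (∀ i j, ((κ i j : ℕ) : ℝ) * ((N:ℝ)⁻¹) ≤ X i j ∧
                X i j < ((κ i j : ℕ) : ℝ) * ((N:ℝ)⁻¹) + (N:ℝ)⁻¹) then
            f (Matrix.of fun i j => ((κ i j : ℕ) : ℝ) * ((N:ℝ)⁻¹) + (N:ℝ)⁻¹ / 2)
          else 0) →
        PermEquivariant fbar ∧ lpDist p f fbar ≤ ENNReal.ofReal ε := by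
  have hp0 : 0 < p := by linarith
  set c : ℝ := (d * n : ℝ) ^ (1 / p)
  obtain ⟨ρ, hρ, hmod⟩ := (hasCompactSupport_of_support_subset_unitCube hsupp)
    |>.exists_pos_entrywise_modulus hcont (η := ε / (c + 1)) (by positivity)
  obtain ⟨m, hm⟩ := exists_nat_one_div_lt hρ
  rw [one_div] at hm
  have hN : 0 < m + 1 := m.succ_pos
  have hclose : ∀ X ∈ unitCubeIco d n, ∀ i j, |X i j - X.map (gridCenter (m + 1)) i j| < ρ :=
    fun X hX i j => (abs_sub_gridCenter_le hN (hX i j).1).trans_lt <| by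
      push_cast; linarith
  refine ⟨m + 1, hN, ?_⟩
  rintro _ rfl
  refine ⟨permEquivariant_gridApprox hN hequiv, ?_⟩
  change lpDist p f (gridApprox (m + 1) f) ≤ _
  rw [gridApprox_eq_indicator hN]
  calc _ ≤ ENNReal.ofReal (c * (ε / (c + 1))) :=
        lpDist_le_of_abs_sub_le hp0 volume_unitCubeIco.le (by positivity)
          (fun X hX => by rw [indicator_of_notMem hX, eq_zero_of_notMem_unitCubeIco hcont hsupp hX])
          (fun X hX i j => by rw [indicator_of_mem hX]; exact (hmod _ _ (hclose X hX) i j).le)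
    _ ≤ ENNReal.ofReal ε := ENNReal.ofReal_le_ofReal <| by
        rw [mul_div_assoc', div_le_iff₀ (by positivity)]; linarith

/-- **Step 1** (Lemma 5): a continuous permutation equivariant function supported in
`[0,1]^{d×n}` can be approximated in `d_p` by the permutation-equivariant piecewise
constant function `f̄(X) = Σ_{L ∈ G_δ} f(C_L) 1{X ∈ S_L}`, where `δ = 1/N`, the grid
`G_δ` is indexed by `κ : Fin d → Fin n → Fin N` via `L_{i,j} = κ_{i,j} δ`, and `C_L`
is the center of the cube `S_L = Π [L_{i,j}, L_{i,j} + δ)`. -/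
theorem stmt_4 (d n : ℕ) (hd : 1 ≤ d) (hn : 2 ≤ n) (p : ℝ) (hp : 1 ≤ p)
    (ε : ℝ) (hε : 0 < ε) (f : Mat d n → Mat d n)
    (hcont : Continuous f) (hequiv : PermEquivariant f)
    (hsupp : Function.support f ⊆ {X : Mat d n | ∀ i j, X i j ∈ Set.Icc (0:ℝ) 1}) :
    ∃ N : ℕ, 1 ≤ N ∧
      ∀ fbar : Mat d n → Mat d n,
        (fbar = fun X => ∑ κ : Fin d → Fin n → Fin N,
          if (∀ i j, ((κ i j : ℕ) : ℝ) * ((N:ℝ)⁻¹) ≤ X i j ∧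
                X i j < ((κ i j : ℕ) : ℝ) * ((N:ℝ)⁻¹) + (N:ℝ)⁻¹) then
            f (Matrix.of fun i j => ((κ i j : ℕ) : ℝ) * ((N:ℝ)⁻¹) + (N:ℝ)⁻¹ / 2)
          else 0) →
        PermEquivariant fbar ∧ lpDist p f fbar ≤ ENNReal.ofReal ε :=
  stmt_4_general d n p hp ε hε f hcont hequiv hsupp
end
end

section
/- Let d, n ≥ 1 and δ ∈ (0,1) with 1/δ ∈ ℕ. Define the scalar quantization map g_q^ent : ℝ → {−δ^{−nd}, 0, δ, …, 1−δ} by g_q^ent(t) = kδ if kδ ≤ t < (k+1)δ for some k ∈ {0, 1, …, 1/δ − 1}, and g_q^ent(t) = −δ^{−nd} otherwise. Then there exists a function g_q : ℝ^{d×n} → G_δ^+ that is a composition of d/δ + d token-wise feed-forward layers with r = 1 hidden node and activations in Φ, and that applies g_q^ent to every entry of its input, i.e., g_q(X)_{i,j} = g_q^ent(X_{i,j}) for all i, j. -/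
open MeasureTheory Matrix Filter
open scoped Classical

noncomputable section

/-- Token-wise feed-forward layer with skip connection, hidden size `r` and
entrywise activation `act`:  `Y ↦ Y + W₂ · act(W₁ Y + b₁ 1ₙᵀ) + b₂ 1ₙᵀ`. -/
def ffL {d n : ℕ} (r : ℕ) (W1 : Matrix (Fin r) (Fin d) ℝ) (W2 : Matrix (Fin d) (Fin r) ℝ)
    (b1 : Fin r → ℝ) (b2 : Fin d → ℝ) (act : ℝ → ℝ) (Y : Mat d n) : Mat d n :=
  Y + W2 * (W1 * Y + Matrix.of fun i _ => b1 i).map act + Matrix.of fun i _ => b2 i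
/-- The class `Φ` of piecewise linear functions `ℝ → ℝ` with at most three pieces,
at least one of which is constant. -/
def InPhi (φ : ℝ → ℝ) : Prop :=
  ∃ c₁ c₂ a₁ β₁ a₂ β₂ a₃ β₃ : ℝ, c₁ ≤ c₂ ∧ (a₁ = 0 ∨ a₂ = 0 ∨ a₃ = 0) ∧
    ∀ t, φ t = if t < c₁ then a₁ * t + β₁ else if t < c₂ then a₂ * t + β₂ else a₃ * t + β₃
/-- A token-wise feed-forward layer with `r` hidden nodes and activation in `Φ`. -/
def IsFFLayer (d n r : ℕ) (f : Mat d n → Mat d n) : Prop :=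
  ∃ W1 W2 b1 b2 φ, InPhi φ ∧ f = fun Y : Mat d n => ffL r W1 W2 b1 b2 φ Y

/-!
A layer with one hidden node whose weights select row `i` acts on the entries of row `i` as the
residual scalar step `t ↦ t + φ t` and leaves the other rows alone, so `d · L` such layers apply
any chain of `L` residual steps to every entry. With activation `quantAct (k δ) δ` the step
collapses `[k δ, (k + 1) δ)` to `k δ` and fixes everything else; after the steps for `k < N = 1/δ`
the interval `[0, 1)` has been rounded down to the grid `δ ℕ` and the rest of `ℝ` is untouched,
and a last step with `clampAct` sends everything outside `[0, 1)` to `-δ^(-n d)`.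
-/

lemma foldl_comp_apply {α : Type*} (l : List (α → α)) (g : α → α) (x : α) :
    l.foldl (fun acc b => b ∘ acc) g x = l.foldl (fun x f => f x) (g x) := by
  induction l generalizing g with
  | nil => rfl
  | cons f l ih => exact ih (f ∘ g)

section RowLayers

variable {d n : ℕ}

def rowLayer (i : Fin d) (φ : ℝ → ℝ) : Mat d n → Mat d n :=
  ffL 1 (of fun _ k => if k = i then 1 else 0) (of fun k _ => if k = i then 1 else 0) 0 0 φ

lemma isFFLayer_rowLayer (i : Fin d) {φ : ℝ → ℝ} (hφ : InPhi φ) :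
    IsFFLayer d n 1 (rowLayer i φ) :=
  ⟨_, _, _, _, φ, hφ, rfl⟩

lemma rowLayer_apply (i : Fin d) (φ : ℝ → ℝ) (Y : Mat d n) (k : Fin d) (j : Fin n) :
    rowLayer i φ Y k j = if k = i then Y i j + φ (Y i j) else Y k j := by
  by_cases hk : k = i <;> simp [rowLayer, ffL, Matrix.mul_apply, hk]

lemma foldl_map_rowLayer_apply (i : Fin d) (ψs : List (ℝ → ℝ)) (Y : Mat d n) (k : Fin d)
    (j : Fin n) :
    ((ψs.map (rowLayer i)).foldl (fun Y f => f Y) Y) k j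
      = if k = i then ψs.foldl (fun t ψ => t + ψ t) (Y i j) else Y k j := by
  induction ψs generalizing Y with
  | nil => by_cases hk : k = i <;> simp [hk]
  | cons ψ ψs ih =>
    rw [List.map_cons, List.foldl_cons, ih]
    by_cases hk : k = i <;> simp [rowLayer_apply, hk]

lemma foldl_flatMap_rowLayer_apply (ψs : List (ℝ → ℝ)) {R : List (Fin d)} (hR : R.Nodup)
    (Y : Mat d n) (k : Fin d) (j : Fin n) :
    ((R.flatMap fun i => ψs.map (rowLayer i)).foldl (fun Y f => f Y) Y) k j
      = if k ∈ R then ψs.foldl (fun t ψ => t + ψ t) (Y k j) else Y k j := by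
  induction R generalizing Y with
  | nil => simp
  | cons i R ih =>
    obtain ⟨hiR, hR⟩ := List.nodup_cons.mp hR
    rw [List.flatMap_cons, List.foldl_append, ih hR]
    by_cases hk : k = i
    · subst hk; simp [hiR, foldl_map_rowLayer_apply]
    · simp [hk, foldl_map_rowLayer_apply]

theorem exists_ffLayers_entrywise {ψs : List (ℝ → ℝ)} (hψs : ∀ ψ ∈ ψs, InPhi ψ) :
    ∃ layers : List (Mat d n → Mat d n),
      layers.length = d * ψs.length ∧
      (∀ f ∈ layers, IsFFLayer d n 1 f) ∧
      ∀ (X : Mat d n) (i : Fin d) (j : Fin n),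
        layers.foldl (fun acc b => b ∘ acc) id X i j = ψs.foldl (fun t ψ => t + ψ t) (X i j) := by
  refine ⟨(List.finRange d).flatMap fun i => ψs.map (rowLayer i), ?_, ?_, fun X i j => ?_⟩
  · simp [List.length_flatMap]
  · simp only [List.mem_flatMap, List.mem_map]
    rintro f ⟨i, -, ψ, hψ, rfl⟩
    exact isFFLayer_rowLayer i (hψs ψ hψ)
  · rw [foldl_comp_apply, foldl_flatMap_rowLayer_apply ψs (List.nodup_finRange d)]
    simp

end RowLayers

def quantAct (c δ t : ℝ) : ℝ := if c ≤ t ∧ t < c + δ then c - t else 0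

def clampAct (M t : ℝ) : ℝ := if 0 ≤ t ∧ t < 1 then 0 else -M - t

lemma inPhi_quantAct {c δ : ℝ} (hδ : 0 ≤ δ) : InPhi (quantAct c δ) := by
  refine ⟨c, c + δ, 0, 0, -1, c, 0, 0, by linarith, Or.inl rfl, fun t => ?_⟩
  unfold quantAct
  split_ifs <;> grind

lemma inPhi_clampAct (M : ℝ) : InPhi (clampAct M) := by
  refine ⟨0, 1, -1, -M, 0, 0, -1, -M, zero_le_one, Or.inr (Or.inl rfl), fun t => ?_⟩
  unfold clampAct
  split_ifs <;> grind

lemma add_quantAct (c δ t : ℝ) :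
    t + quantAct c δ t = if c ≤ t ∧ t < c + δ then c else t := by
  unfold quantAct; split_ifs <;> ring

lemma add_clampAct (M t : ℝ) : t + clampAct M t = if 0 ≤ t ∧ t < 1 then t else -M := by
  unfold clampAct; split_ifs <;> ring

lemma mul_floor_div_le {δ : ℝ} (hδ : 0 < δ) (t : ℝ) : δ * ⌊t / δ⌋ ≤ t := by
  rw [mul_comm, ← le_div_iff₀ hδ]
  exact Int.floor_le _

lemma floor_div_eq_of_mem_Ico {δ t : ℝ} (hδ : 0 < δ) {k : ℕ} (h₁ : k * δ ≤ t)
    (h₂ : t < (k + 1) * δ) : ⌊t / δ⌋ = k := by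
  rw [Int.floor_eq_iff, le_div_iff₀ hδ, div_lt_iff₀ hδ]
  push_cast
  exact ⟨h₁, h₂⟩

lemma exists_nat_mem_Ico_iff {δ t : ℝ} (hδ : 0 < δ) (m : ℕ) :
    (∃ k : ℕ, k < m ∧ k * δ ≤ t ∧ t < (k + 1) * δ) ↔ 0 ≤ t ∧ t < m * δ := by
  constructor
  · rintro ⟨k, hk, h₁, h₂⟩
    have hk' : (k : ℝ) + 1 ≤ m := by exact_mod_cast hk
    exact ⟨(by positivity : (0:ℝ) ≤ k * δ).trans h₁, h₂.trans_le (by gcongr)⟩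
  · rintro ⟨h₀, h₁⟩
    have hq : 0 ≤ t / δ := div_nonneg h₀ hδ.le
    refine ⟨⌊t / δ⌋₊, ?_, ?_, ?_⟩
    · rwa [Nat.floor_lt hq, div_lt_iff₀ hδ]
    · rw [← le_div_iff₀ hδ]; exact Nat.floor_le hq
    · rw [← div_lt_iff₀ hδ]; exact Nat.lt_floor_add_one _

lemma foldl_add_quantAct {δ : ℝ} (hδ : 0 < δ) (m : ℕ) (t : ℝ) :
    ((List.range m).map fun k : ℕ => quantAct (k * δ) δ).foldl (fun t ψ => t + ψ t) t
      = if 0 ≤ t ∧ t < m * δ then δ * ⌊t / δ⌋ else t := by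
  induction m with
  | zero => simp
  | succ m ih =>
    rw [List.range_succ, List.map_append, List.foldl_append, ih]
    simp only [List.map_cons, List.map_nil, List.foldl_cons, List.foldl_nil, add_quantAct]
    push_cast
    by_cases hlo : 0 ≤ t ∧ t < m * δ
    · have hq := mul_floor_div_le hδ t
      rw [if_pos hlo, if_neg (fun h => by linarith [h.1, hlo.2]),
        if_pos ⟨hlo.1, by linarith [hlo.2]⟩]
    · rw [if_neg hlo]
      by_cases hm : m * δ ≤ t ∧ t < m * δ + δ
      · rw [if_pos hm, if_pos ⟨(by positivity : (0:ℝ) ≤ m * δ).trans hm.1, by linarith [hm.2]⟩,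
          floor_div_eq_of_mem_Ico hδ hm.1 (by linarith [hm.2])]
        push_cast; ring
      · rw [if_neg hm, if_neg]
        grind

lemma foldl_add_quantAct_clampAct {δ : ℝ} (hδ : 0 < δ) {N : ℕ} (hδN : δ * N = 1) (M t : ℝ) :
    (((List.range N).map fun k : ℕ => quantAct (k * δ) δ) ++ [clampAct M]).foldl
        (fun t ψ => t + ψ t) t
      = if ∃ k : ℕ, k < N ∧ (k : ℝ) * δ ≤ t ∧ t < ((k : ℝ) + 1) * δ then δ * ⌊t / δ⌋
        else -M := by
  have hNδ : (N : ℝ) * δ = 1 := by rw [mul_comm, hδN]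
  rw [List.foldl_append, foldl_add_quantAct hδ, List.foldl_cons, List.foldl_nil, add_clampAct]
  simp only [exists_nat_mem_Ico_iff hδ, hNδ]
  by_cases ht : 0 ≤ t ∧ t < 1
  · have hq := mul_floor_div_le hδ t
    have hq₀ : 0 ≤ δ * ⌊t / δ⌋ := by
      have := Int.floor_nonneg.mpr (div_nonneg ht.1 hδ.le)
      positivity
    rw [if_pos ht, if_pos ⟨hq₀, hq.trans_lt ht.2⟩, if_pos ht]
  · rw [if_neg ht, if_neg ht, if_neg ht]

theorem stmt_7_general (d n N : ℕ) (δ : ℝ)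
    (hδ0 : 0 < δ) (hδN : δ * N = 1) :
    ∃ layers : List (Mat d n → Mat d n),
      layers.length = d * N + d ∧
      (∀ f ∈ layers, IsFFLayer d n 1 f) ∧
      (∀ (X : Mat d n) (i : Fin d) (j : Fin n),
        layers.foldl (fun acc b => b ∘ acc) id X i j =
          if ∃ k : ℕ, k < N ∧ (k : ℝ) * δ ≤ X i j ∧ X i j < ((k : ℝ) + 1) * δ then
            δ * (⌊X i j / δ⌋ : ℝ)
          else -((δ ^ (n * d))⁻¹)) := by
  have hψs : ∀ ψ ∈ (List.range N).map (fun k : ℕ => quantAct (k * δ) δ) ++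
      [clampAct (δ ^ (n * d))⁻¹], InPhi ψ := by
    simp only [List.mem_append, List.mem_map, List.mem_singleton]
    rintro ψ (⟨k, -, rfl⟩ | rfl)
    · exact inPhi_quantAct hδ0.le
    · exact inPhi_clampAct _
  obtain ⟨layers, hlen, hff, hval⟩ := exists_ffLayers_entrywise (d := d) (n := n) hψs
  refine ⟨layers, by simp [hlen, mul_add], hff, fun X i j => ?_⟩
  rw [hval, foldl_add_quantAct_clampAct hδ0 hδN]

/-- **Lemma 5 (quantization)**: with `δ = 1/N`, there is a composition of `d/δ + d`
token-wise feed-forward layers with `r = 1` and activations in `Φ` that applies the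
scalar quantization map `g_q^ent` (sending `t ∈ [kδ, (k+1)δ)`, `0 ≤ k < 1/δ`, to `kδ`
and everything else to `−δ^{−nd}`) to every entry of its input. -/
theorem stmt_7 (d n N : ℕ) (hd : 1 ≤ d) (hn : 1 ≤ n) (δ : ℝ)
    (hδ0 : 0 < δ) (hδ1 : δ < 1) (hδN : δ * N = 1) :
    ∃ layers : List (Mat d n → Mat d n),
      layers.length = d * N + d ∧
      (∀ f ∈ layers, IsFFLayer d n 1 f) ∧
      (∀ (X : Mat d n) (i : Fin d) (j : Fin n),
        layers.foldl (fun acc b => b ∘ acc) id X i j =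
          if ∃ k : ℕ, k < N ∧ (k : ℝ) * δ ≤ X i j ∧ X i j < ((k : ℝ) + 1) * δ then
            δ * (⌊X i j / δ⌋ : ℝ)
          else -((δ ^ (n * d))⁻¹)) :=
  stmt_7_general d n N δ hδ0 hδN
end
end

section
/- Let d ≥ 1, n ≥ 1, u ∈ ℝ^d, b ∈ ℝ, and e^{(1)} = (1, 0, …, 0)^T ∈ ℝ^d. Define ψ(Z; b) = e^{(1)} (u^T Z) σ_H[(u^T Z)^T (u^T Z − b 1_n^T)] ∈ ℝ^{d×n} for Z ∈ ℝ^{d×n}. Then all rows of ψ(Z; b) other than the first row are zero, and for every j ∈ {1, …, n}: if u^T Z_{:,j} > b then ψ(Z; b)_{1,j} = max_k u^T Z_{:,k}, and if u^T Z_{:,j} < b then ψ(Z; b)_{1,j} = min_k u^T Z_{:,k}. -/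
open MeasureTheory Matrix Filter
open scoped Classical

noncomputable section

/-- Column-wise hardmax operator: in each column, puts mass `1/k` on its `k` maximizing
entries and `0` elsewhere. -/
def hardmax {n : ℕ} (A : Matrix (Fin n) (Fin n) ℝ) : Matrix (Fin n) (Fin n) ℝ :=
  Matrix.of fun i j =>
    if (∀ k, A k j ≤ A i j) then
      ((Finset.univ.filter fun i' => ∀ k, A k j ≤ A i' j).card : ℝ)⁻¹
    else 0

/-!
For `c := r j - b`, column `j` of `(uᵀZ)ᵀ(uᵀZ − b 1ₙᵀ)` is `c • r`. If `c > 0` its maximizers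
are the maximizers of `r`, and if `c < 0` they are the minimizers of `r`; in both cases
`r` is constant on them, so averaging `r` over them gives `max r`, resp. `min r`.
-/

section ArgmaxWeights

variable {ι : Type*} [Fintype ι]

def argmaxWeights (g : ι → ℝ) (i : ι) : ℝ :=
  if ∀ k, g k ≤ g i then ((Finset.univ.filter fun i' => ∀ k, g k ≤ g i').card : ℝ)⁻¹ else 0

theorem hardmax_apply {n : ℕ} (A : Matrix (Fin n) (Fin n) ℝ) (i j : Fin n) :
    hardmax A i j = argmaxWeights (fun k => A k j) i := by
  rw [hardmax, argmaxWeights, of_apply]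
  -- not `rfl`: the two sides decide `∀ k` with different (subsingleton) instances
  congr

theorem argmaxWeights_congr {g g' : ι → ℝ} (h : ∀ i k, g k ≤ g i ↔ g' k ≤ g' i) :
    argmaxWeights g = argmaxWeights g' := by
  funext i
  simp only [argmaxWeights, h]

theorem argmaxWeights_mul_const_of_pos (g : ι → ℝ) {c : ℝ} (hc : 0 < c) :
    argmaxWeights (fun k => g k * c) = argmaxWeights g :=
  argmaxWeights_congr fun _ _ => mul_le_mul_iff_of_pos_right hc

theorem argmaxWeights_mul_const_of_neg (g : ι → ℝ) {c : ℝ} (hc : c < 0) :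
    argmaxWeights (fun k => g k * c) = argmaxWeights (-g) :=
  argmaxWeights_congr fun _ _ => by
    rw [mul_le_mul_right_of_neg hc, Pi.neg_apply, Pi.neg_apply, neg_le_neg_iff]

theorem sum_mul_argmaxWeights_of_eq [Nonempty ι] {f g : ι → ℝ} {m : ℝ}
    (hf : ∀ i, (∀ k, g k ≤ g i) → f i = m) :
    ∑ i, f i * argmaxWeights g i = m := by
  set S := Finset.univ.filter fun i => ∀ k, g k ≤ g i
  obtain ⟨i₀, -, hi₀⟩ := Finset.exists_max_image Finset.univ g Finset.univ_nonempty
  have hS : (S.card : ℝ) ≠ 0 := by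
    have : i₀ ∈ S := Finset.mem_filter.mpr ⟨Finset.mem_univ _, fun k => hi₀ k (Finset.mem_univ k)⟩
    exact_mod_cast (Finset.card_pos.mpr ⟨i₀, this⟩).ne'
  calc ∑ i, f i * argmaxWeights g i = ∑ i ∈ S, m * (S.card : ℝ)⁻¹ := by
        simp only [argmaxWeights, mul_ite, mul_zero, ← Finset.sum_filter]
        exact Finset.sum_congr rfl fun i hi => by rw [hf i (Finset.mem_filter.mp hi).2]
    _ = m := by rw [Finset.sum_const, nsmul_eq_mul]; field_simp

theorem sum_mul_argmaxWeights_self [Nonempty ι] (f : ι → ℝ) :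
    ∑ i, f i * argmaxWeights f i = Finset.univ.sup' Finset.univ_nonempty f :=
  sum_mul_argmaxWeights_of_eq fun i hi =>
    le_antisymm (Finset.le_sup' f (Finset.mem_univ i)) (Finset.sup'_le _ _ fun k _ => hi k)

theorem sum_mul_argmaxWeights_neg_self [Nonempty ι] (f : ι → ℝ) :
    ∑ i, f i * argmaxWeights (-f) i = Finset.univ.inf' Finset.univ_nonempty f :=
  sum_mul_argmaxWeights_of_eq fun i hi =>
    le_antisymm (Finset.le_inf' _ _ fun k _ => neg_le_neg_iff.mp (hi k))
      (Finset.inf'_le f (Finset.mem_univ i))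

end ArgmaxWeights

theorem vecMulVec_mul_apply {l m n α : Type*} [NonUnitalSemiring α] [Fintype m]
    (x : l → α) (y : m → α) (M : Matrix m n α) (i : l) (j : n) :
    (vecMulVec x y * M) i j = x i * ∑ k, y k * M k j := by
  rw [vecMulVec_mul, vecMulVec_apply, vecMul, dotProduct]

theorem stmt_11_general (d n : ℕ) (hn : 1 ≤ n) (u : Fin d → ℝ) (b : ℝ)
    (Z : Mat d n) :
    let r : Fin n → ℝ := fun j => ∑ i, u i * Z i j
    let e1 : Fin d → ℝ := fun i => if (i : ℕ) = 0 then 1 else 0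
    let psi : Mat d n :=
      Matrix.vecMulVec e1 r * hardmax (Matrix.of fun j j' : Fin n => r j * (r j' - b))
    (∀ (i : Fin d) (j : Fin n), (i : ℕ) ≠ 0 → psi i j = 0) ∧
    (∀ (i : Fin d) (j : Fin n), (i : ℕ) = 0 → b < r j →
      psi i j = Finset.univ.sup' (Finset.univ_nonempty_iff.mpr ⟨⟨0, hn⟩⟩) r) ∧
    (∀ (i : Fin d) (j : Fin n), (i : ℕ) = 0 → r j < b →
      psi i j = Finset.univ.inf' (Finset.univ_nonempty_iff.mpr ⟨⟨0, hn⟩⟩) r) := by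
  intro r e1 psi
  have : Nonempty (Fin n) := ⟨⟨0, hn⟩⟩
  have hpsi (i : Fin d) (j : Fin n) :
      psi i j = e1 i * ∑ k, r k * argmaxWeights (fun k => r k * (r j - b)) k := by
    simp only [psi, vecMulVec_mul_apply, hardmax_apply, of_apply]
  refine ⟨fun i j hi => ?_, fun i j hi hj => ?_, fun i j hi hj => ?_⟩
  · rw [hpsi, show e1 i = 0 from if_neg hi, zero_mul]
  · rw [hpsi, show e1 i = 1 from if_pos hi, one_mul,
      argmaxWeights_mul_const_of_pos r (sub_pos.mpr hj), sum_mul_argmaxWeights_self]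
  · rw [hpsi, show e1 i = 1 from if_pos hi, one_mul,
      argmaxWeights_mul_const_of_neg r (sub_neg.mpr hj), sum_mul_argmaxWeights_neg_self]

/-- Properties of `ψ(Z; b) = e⁽¹⁾ (uᵀZ) σ_H[(uᵀZ)ᵀ(uᵀZ − b·1ₙᵀ)]`: all rows but the
first vanish; on the first row, entries `j` with `uᵀZ_{:,j} > b` equal `max_k uᵀZ_{:,k}`
and entries with `uᵀZ_{:,j} < b` equal `min_k uᵀZ_{:,k}`. -/
theorem stmt_11 (d n : ℕ) (hd : 1 ≤ d) (hn : 1 ≤ n) (u : Fin d → ℝ) (b : ℝ)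
    (Z : Mat d n) :
    let r : Fin n → ℝ := fun j => ∑ i, u i * Z i j
    let e1 : Fin d → ℝ := fun i => if (i : ℕ) = 0 then 1 else 0
    let psi : Mat d n :=
      Matrix.vecMulVec e1 r * hardmax (Matrix.of fun j j' : Fin n => r j * (r j' - b))
    (∀ (i : Fin d) (j : Fin n), (i : ℕ) ≠ 0 → psi i j = 0) ∧
    (∀ (i : Fin d) (j : Fin n), (i : ℕ) = 0 → b < r j →
      psi i j = Finset.univ.sup' (Finset.univ_nonempty_iff.mpr ⟨⟨0, hn⟩⟩) r) ∧
    (∀ (i : Fin d) (j : Fin n), (i : ℕ) = 0 → r j < b →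
      psi i j = Finset.univ.inf' (Finset.univ_nonempty_iff.mpr ⟨⟨0, hn⟩⟩) r) :=
  stmt_11_general d n hn u b Z
end
end

section
/- Let d ≥ 1, n ≥ 2, and δ ∈ (0,1) with 1/δ ∈ ℕ. Let l_1 < l_2 < … < l_n be elements of the grid {0, δ, 2δ, …, δ^{−d+1} − δ}, and for j ∈ {1, …, n} define l̃_j = l_j + Σ_{k=1}^{j−1} δ^{−kd}(l_{j−k} − l_{j−k+1}) + δ^{−jd}(l_n − l_1). Then l_n < l̃_1 < l̃_2 < … < l̃_n. -/
/-!
Put `b = δ⁻ᵈ = Nᵈ`. The `l̃_j` satisfy the recursion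
`l̃_{j+1} - l̃_j = (b - 1)(l̃_j - l_{j+1})`. Every grid value is at most `M = (b - 1)δ`,
while `l̃_1 = l_1 + b(l_n - l_1) ≥ bδ > M` since distinct grid values differ by at least `δ`.
Inductively `l̃_j > M ≥ l_{j+1}`, so each step of the recursion is an increase.
-/

open Finset

section ShiftedSum

variable {R : Type*}

/-- `l̃_j` with `b = δ⁻ᵈ` and `c = l_n - l_1`. -/
def shiftedSum [CommRing R] (b c : R) (l : ℕ → R) (j : ℕ) : R :=
  l j + ∑ k ∈ Icc 1 (j - 1), b ^ k * (l (j - k) - l (j - k + 1)) + b ^ j * c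

theorem shiftedSum_one [CommRing R] (b c : R) (l : ℕ → R) :
    shiftedSum b c l 1 = l 1 + b * c := by
  simp [shiftedSum]

theorem shiftedSum_succ_sub [CommRing R] (b c : R) (l : ℕ → R) {j : ℕ} (hj : 1 ≤ j) :
    shiftedSum b c l (j + 1) - shiftedSum b c l j =
      (b - 1) * (shiftedSum b c l j - l (j + 1)) := by
  obtain ⟨i, rfl⟩ : ∃ i, j = i + 1 := ⟨j - 1, by omega⟩
  have hsum : ∑ k ∈ Icc 1 (i + 1), b ^ k * (l (i + 1 + 1 - k) - l (i + 1 + 1 - k + 1))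
      = b * (l (i + 1) - l (i + 1 + 1))
        + b * ∑ k ∈ Icc 1 i, b ^ k * (l (i + 1 - k) - l (i + 1 - k + 1)) := by
    rw [← Ico_add_one_right_eq_Icc, ← Ico_add_one_right_eq_Icc, sum_Ico_eq_sum_range,
      sum_Ico_eq_sum_range, Nat.add_sub_cancel, Nat.add_sub_cancel, sum_range_succ', mul_sum,
      add_comm]
    congr 1
    · simp
    · refine sum_congr rfl fun k _ => ?_
      rw [show i + 1 + 1 - (1 + (k + 1)) = i + 1 - (1 + k) by omega]
      ring
  rw [shiftedSum, shiftedSum, Nat.add_sub_cancel, Nat.add_sub_cancel, hsum]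
  ring

variable [CommRing R] [LinearOrder R] [IsStrictOrderedRing R] {b c : R} {l : ℕ → R}

theorem shiftedSum_lt_shiftedSum_succ (hb : 1 < b) {j : ℕ} (hj : 1 ≤ j)
    (hlj : l (j + 1) < shiftedSum b c l j) :
    shiftedSum b c l j < shiftedSum b c l (j + 1) := by
  refine sub_pos.mp ?_
  rw [shiftedSum_succ_sub b c l hj]
  exact mul_pos (sub_pos.mpr hb) (sub_pos.mpr hlj)

theorem lt_shiftedSum {M : R} {n : ℕ} (hb : 1 < b) (hl : ∀ j, 1 ≤ j → j ≤ n → l j ≤ M)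
    (h1 : M < shiftedSum b c l 1) {j : ℕ} (hj : 1 ≤ j) (hjn : j ≤ n) :
    M < shiftedSum b c l j := by
  induction j, hj using Nat.le_induction with
  | base => exact h1
  | succ j hj ih =>
    have hprev := ih (by omega)
    have hlj := (hl (j + 1) (by omega) hjn).trans_lt hprev
    exact hprev.trans (shiftedSum_lt_shiftedSum_succ hb hj hlj)

end ShiftedSum

section Grid

variable {R : Type*} [Ring R] [LinearOrder R] [IsStrictOrderedRing R]

theorem natCast_mul_le_of_lt {δ : R} (hδ : 0 ≤ δ) {k m : ℕ} (hk : k < m) :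
    (k : R) * δ ≤ ((m : R) - 1) * δ := by
  have : (k : R) + 1 ≤ m := by exact_mod_cast hk
  exact mul_le_mul_of_nonneg_right (le_sub_iff_add_le.mpr this) hδ

theorem natCast_mul_add_le_of_lt {δ : R} (hδ : 0 < δ) {k k' : ℕ} (h : (k : R) * δ < k' * δ) :
    (k : R) * δ + δ ≤ k' * δ := by
  have : (k : R) + 1 ≤ k' := by exact_mod_cast (lt_of_mul_lt_mul_right h hδ.le)
  simpa [add_mul] using mul_le_mul_of_nonneg_right this hδ.le

end Grid

/-- For strictly increasing grid values `l_1 < … < l_n` in `{0, δ, …, δ^{−d+1} − δ}`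
(with `δ = 1/N`), the shifted values
`l̃_j = l_j + Σ_{k=1}^{j−1} δ^{−kd}(l_{j−k} − l_{j−k+1}) + δ^{−jd}(l_n − l_1)`
satisfy `l_n < l̃_1 < l̃_2 < … < l̃_n`. -/
theorem stmt_13 (d n N : ℕ) (hd : 1 ≤ d) (hn : 2 ≤ n) (δ : ℝ)
    (hδ0 : 0 < δ) (hδ1 : δ < 1) (hδN : δ * N = 1)
    (l : ℕ → ℝ)
    (hmono : ∀ j j' : ℕ, 1 ≤ j → j < j' → j' ≤ n → l j < l j')
    (hgrid : ∀ j : ℕ, 1 ≤ j → j ≤ n → ∃ k : ℕ, k < N ^ d ∧ l j = (k : ℝ) * δ) :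
    let lt : ℕ → ℝ := fun j =>
      l j + (∑ k ∈ Finset.Icc 1 (j - 1), (δ ^ (k * d))⁻¹ * (l (j - k) - l (j - k + 1)))
        + (δ ^ (j * d))⁻¹ * (l n - l 1)
    l n < lt 1 ∧ ∀ j : ℕ, 2 ≤ j → j ≤ n → lt (j - 1) < lt j := by
  intro lt
  have hN : (N : ℝ) = δ⁻¹ := eq_inv_of_mul_eq_one_right hδN
  have hlt : lt = shiftedSum ((N : ℝ) ^ d) (l n - l 1) l := by
    funext j
    simp only [lt, shiftedSum, hN, ← inv_pow, pow_mul']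
  have hb : 1 < (N : ℝ) ^ d := one_lt_pow₀ (hN ▸ one_lt_inv₀ hδ0 |>.mpr hδ1) (by omega)
  have hle : ∀ j, 1 ≤ j → j ≤ n → l j ≤ ((N : ℝ) ^ d - 1) * δ := fun j hj hjn => by
    obtain ⟨k, hk, hlk⟩ := hgrid j hj hjn
    rw [hlk]
    exact_mod_cast natCast_mul_le_of_lt hδ0.le hk
  have h1 : ((N : ℝ) ^ d - 1) * δ < shiftedSum ((N : ℝ) ^ d) (l n - l 1) l 1 := by
    obtain ⟨k₁, -, hk₁⟩ := hgrid 1 le_rfl (by omega)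
    obtain ⟨kₙ, -, hkₙ⟩ := hgrid n (by omega) le_rfl
    have hgap : δ ≤ l n - l 1 := by
      have h := hmono 1 n le_rfl (by omega) le_rfl
      rw [hk₁, hkₙ] at h ⊢
      linarith [natCast_mul_add_le_of_lt hδ0 h]
    have hl₁ : 0 ≤ l 1 := hk₁ ▸ by positivity
    rw [shiftedSum_one]
    nlinarith
  rw [hlt]
  refine ⟨(hle n (by omega) le_rfl).trans_lt h1, fun j hj hjn => ?_⟩
  obtain ⟨i, rfl⟩ : ∃ i, j = i + 1 := ⟨j - 1, by omega⟩
  have hi : 1 ≤ i := by omega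
  exact shiftedSum_lt_shiftedSum_succ hb hi
    ((hle (i + 1) (by omega) hjn).trans_lt (lt_shiftedSum hb hle h1 hi (by omega)))
end

section
/- Let c_1 < c_2 and b_1, a_2, b_2, a_3, b_3 ∈ ℝ, and let φ : ℝ → ℝ be given by φ(t) = b_1 for t < c_1, φ(t) = a_2 t + b_2 for c_1 ≤ t < c_2, and φ(t) = a_3 t + b_3 for t ≥ c_2. Then for every ε with 0 < ε < c_2 − c_1, there exist coefficients α_1, α_2, α_3, α_4 ∈ ℝ and shifts β_1, β_2, β_3, β_4 ∈ ℝ such that the function φ̃(t) = b_1 + Σ_{i=1}^4 α_i ReLU(t − β_i) satisfies φ̃(t) = φ(t) for all t ∉ [c_1 − ε, c_1) ∪ [c_2 − ε, c_2). -/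
/-!
Two ReLUs with kinks at `c - ε` and `c`, weighted `j / ε` and `s - j / ε`, vanish left of
`c - ε` and equal `j + s (t - c)` right of `c`: the first one climbs by `j` across the gap and
the second one corrects the slope. One such pair at each breakpoint of `φ`, with `j` the jump and
`s` the change of slope there, reproduces `φ` off the two gaps.
-/

noncomputable def reluStep (c ε j s t : ℝ) : ℝ :=
  j / ε * max (t - (c - ε)) 0 + (s - j / ε) * max (t - c) 0

lemma reluStep_of_le {c ε j s t : ℝ} (hε : 0 ≤ ε) (ht : t ≤ c - ε) :
    reluStep c ε j s t = 0 := by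
  rw [reluStep, max_eq_right (by linarith), max_eq_right (by linarith)]
  ring

lemma reluStep_of_ge {c ε j s t : ℝ} (hε : 0 < ε) (ht : c ≤ t) :
    reluStep c ε j s t = j + s * (t - c) := by
  rw [reluStep, max_eq_left (by linarith), max_eq_left (by linarith)]
  field_simp
  ring

lemma sum_relu_eq_reluStep_add_reluStep (b c₁ c₂ ε j₁ j₂ s₁ s₂ t : ℝ) :
    b + ∑ i, ![j₁ / ε, s₁ - j₁ / ε, j₂ / ε, s₂ - j₂ / ε] i *
        max (t - ![c₁ - ε, c₁, c₂ - ε, c₂] i) 0 =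
      b + reluStep c₁ ε j₁ s₁ t + reluStep c₂ ε j₂ s₂ t := by
  simp only [Fin.sum_univ_four, reluStep, Matrix.cons_val]
  ring

theorem stmt_16_general (c₁ c₂ b₁ a₂ b₂ a₃ b₃ : ℝ) (φ : ℝ → ℝ)
    (hφ : ∀ t, φ t = if t < c₁ then b₁ else if t < c₂ then a₂ * t + b₂ else a₃ * t + b₃)
    (ε : ℝ) (hε0 : 0 < ε) (hε : ε < c₂ - c₁) :
    ∃ α β : Fin 4 → ℝ,
      ∀ t : ℝ, t ∉ Set.Ico (c₁ - ε) c₁ ∪ Set.Ico (c₂ - ε) c₂ →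
        b₁ + ∑ i, α i * max (t - β i) 0 = φ t := by
  set j₁ := a₂ * c₁ + b₂ - b₁
  set j₂ := a₃ * c₂ + b₃ - (a₂ * c₂ + b₂)
  refine ⟨_, _, fun t ht ↦
    (sum_relu_eq_reluStep_add_reluStep b₁ c₁ c₂ ε j₁ j₂ a₂ (a₃ - a₂) t).trans ?_⟩
  simp only [Set.mem_union, Set.mem_Ico, not_or, not_and, not_lt] at ht
  rw [hφ]
  rcases lt_or_ge t (c₁ - ε) with h₁ | h₁
  · rw [if_pos (by linarith), reluStep_of_le hε0.le h₁.le, reluStep_of_le hε0.le (by linarith)]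
    ring
  have ht₁ := ht.1 h₁
  rcases lt_or_ge t (c₂ - ε) with h₂ | h₂
  · rw [if_neg ht₁.not_gt, if_pos (by linarith), reluStep_of_ge hε0 ht₁,
      reluStep_of_le hε0.le h₂.le]
    ring
  have ht₂ := ht.2 h₂
  rw [if_neg ht₁.not_gt, if_neg ht₂.not_gt, reluStep_of_ge hε0 ht₁,
    reluStep_of_ge hε0 ht₂]
  ring

/-- A (possibly discontinuous) three-piece piecewise linear function whose first piece
is constant can be written, off two intervals `[c₁−ε, c₁)` and `[c₂−ε, c₂)` of width
`ε`, as `b₁` plus a combination of four ReLUs. -/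
theorem stmt_16 (c₁ c₂ b₁ a₂ b₂ a₃ b₃ : ℝ) (hc : c₁ < c₂) (φ : ℝ → ℝ)
    (hφ : ∀ t, φ t = if t < c₁ then b₁ else if t < c₂ then a₂ * t + b₂ else a₃ * t + b₃)
    (ε : ℝ) (hε0 : 0 < ε) (hε : ε < c₂ - c₁) :
    ∃ α β : Fin 4 → ℝ,
      ∀ t : ℝ, t ∉ Set.Ico (c₁ - ε) c₁ ∪ Set.Ico (c₂ - ε) c₂ →
        b₁ + ∑ i, α i * max (t - β i) 0 = φ t :=
  stmt_16_general c₁ c₂ b₁ a₂ b₂ a₃ b₃ φ hφ ε hε0 hε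
end

section
/- Let n ≥ 1 and a ∈ ℝ^n, let S = {j : a_j = max_i a_i} and k = |S|. Then for every j ∈ {1, …, n}, the softmax value exp(λ a_j) / Σ_{i=1}^n exp(λ a_i) converges as λ → ∞ to 1/k if j ∈ S and to 0 if j ∉ S; that is, the softmax of λa converges entrywise to the hardmax of a. -/
/-! Subtracting the maximum `M` of `a` does not change the softmax of `λa`. After the shift,
`exp (λ (aᵢ - M))` tends to `1` when `aᵢ = M` and to `0` otherwise, so the denominator tends to
the number `k ≥ 1` of maximizers and the `j`-th entry to `1/k` or `0`. -/

open Filter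
open scoped Classical

noncomputable section

namespace Softmax

variable {ι : Type*} [Fintype ι]

def softmax (b : ι → ℝ) (j : ι) : ℝ :=
  Real.exp (b j) / ∑ i, Real.exp (b i)

def hardmax (a : ι → ℝ) [DecidablePred fun j => ∀ i, a i ≤ a j] (j : ι) : ℝ :=
  if ∀ i, a i ≤ a j then
    ((Finset.univ.filter fun i => ∀ i', a i' ≤ a i).card : ℝ)⁻¹
  else 0

theorem softmax_sub_const (b : ι → ℝ) (c : ℝ) (j : ι) :
    softmax (fun i => b i - c) j = softmax b j := by
  simp only [softmax, Real.exp_sub, ← Finset.sum_div]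
  exact div_div_div_cancel_right₀ (Real.exp_pos c).ne' _ _

theorem tendsto_exp_mul_atTop_of_nonpos {c : ℝ} (hc : c ≤ 0) :
    Tendsto (fun lam : ℝ => Real.exp (lam * c)) atTop (nhds (if c = 0 then 1 else 0)) := by
  rcases hc.lt_or_eq with hneg | rfl
  · rw [if_neg hneg.ne]
    exact Real.tendsto_exp_atBot.comp (tendsto_id.atTop_mul_const_of_neg hneg)
  · simp

theorem tendsto_softmax_smul_atTop (a : ι → ℝ) [DecidablePred fun j => ∀ i, a i ≤ a j]
    (j : ι) :
    Tendsto (fun lam : ℝ => softmax (lam • a) j) atTop (nhds (hardmax a j)) := by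
  have hne : (Finset.univ : Finset ι).Nonempty := ⟨j, Finset.mem_univ j⟩
  set M := Finset.univ.sup' hne a
  have isMax_iff (i : ι) : (∀ i', a i' ≤ a i) ↔ a i - M = 0 := by
    rw [sub_eq_zero, le_antisymm_iff, and_iff_right (Finset.le_sup' a (Finset.mem_univ i)),
      Finset.sup'_le_iff]
    simp
  set S := Finset.univ.filter fun i => ∀ i', a i' ≤ a i
  have hS : 0 < (S.card : ℝ) := by
    obtain ⟨i₀, -, hi₀⟩ := Finset.exists_mem_eq_sup' hne a
    have hi₀S : i₀ ∈ S := by simp [S, isMax_iff, M, hi₀]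
    exact_mod_cast Finset.card_pos.mpr ⟨i₀, hi₀S⟩
  have hterm (i : ι) : Tendsto (fun lam : ℝ => Real.exp (lam * (a i - M))) atTop
      (nhds (if ∀ i', a i' ≤ a i then 1 else 0)) := by
    simpa only [isMax_iff] using
      tendsto_exp_mul_atTop_of_nonpos (sub_nonpos.mpr (Finset.le_sup' a (Finset.mem_univ i)))
  have hden : Tendsto (fun lam : ℝ => ∑ i, Real.exp (lam * (a i - M))) atTop
      (nhds (S.card : ℝ)) := by
    rw [Finset.natCast_card_filter]
    exact tendsto_finsetSum _ fun i _ => hterm i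
  have hshift (lam : ℝ) :
      softmax (lam • a) j = Real.exp (lam * (a j - M)) / ∑ i, Real.exp (lam * (a i - M)) := by
    rw [← softmax_sub_const _ (lam * M)]
    simp only [softmax, Pi.smul_apply, smul_eq_mul, mul_sub]
  have hlim : hardmax a j = (if ∀ i', a i' ≤ a j then 1 else 0) / (S.card : ℝ) := by
    unfold hardmax
    split_ifs <;> simp [S]
  simp only [hshift, hlim]
  exact (hterm j).div hden hS.ne'

end Softmax

theorem stmt_17_general (n : ℕ) (a : Fin n → ℝ) (j : Fin n) :
    Tendsto (fun lam : ℝ => Real.exp (lam * a j) / ∑ i, Real.exp (lam * a i)) atTop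
      (nhds (if ∀ i, a i ≤ a j then
        (((Finset.univ.filter fun i => ∀ i', a i' ≤ a i).card : ℝ))⁻¹
      else 0)) := by
  exact Softmax.tendsto_softmax_smul_atTop a j

/-- Softmax of `λa` converges entrywise, as `λ → ∞`, to the hardmax of `a`: the limit
is `1/k` at each of the `k` entries where `a` attains its maximum, and `0` elsewhere. -/
theorem stmt_17 (n : ℕ) (hn : 1 ≤ n) (a : Fin n → ℝ) (j : Fin n) :
    Tendsto (fun lam : ℝ => Real.exp (lam * a j) / ∑ i, Real.exp (lam * a i)) atTop
      (nhds (if ∀ i, a i ≤ a j then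
        (((Finset.univ.filter fun i => ∀ i', a i' ≤ a i).card : ℝ))⁻¹
      else 0)) :=
  stmt_17_general n a j
end
end

section
/- Let d ≥ 1, n ≥ 2, δ ∈ (0, 1/2] with 1/δ ∈ ℕ, and let 1 ≤ n' ≤ n − 1. For any real numbers l'_1 < l'_2 < … < l'_{n'} all belonging to the grid {0, δ, 2δ, …, δ^{−d+1} − δ}, the quantity l̃ = l'_{n'} + Σ_{k=1}^{n'−1} δ^{−kd}(l'_{n'−k} − l'_{n'−k+1}) + δ^{−n'd}(l'_{n'} − l'_1) satisfies l̃ ≤ δ^{−n'd+1}(δ^{−d} − 1) − δ(δ^{−d} − 1)^2 < δ^{−(n−1)d+1}(δ^{−d} − 1); in particular, l̃ is strictly smaller than the value δ^{−(n−1)d+1}(δ^{−d} − 1), which is a lower bound for the corresponding quantity computed from any n strictly increasing grid values. -/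
/-!
Write `A = δ⁻ᵈ = Nᵈ`, so that `δ^{-kd} = Aᵏ` and every grid value lies in `[0, δ(A - 1)]`.
The summands `Aᵏ (l'_{n'-k} - l'_{n'-k+1})` are nonpositive, so replacing `Aᵏ` by `A ≤ Aᵏ`
only increases them, and the sum telescopes to at most `A (l'_1 - l'_{n'})`. Hence
`l̃ ≤ l'_{n'} + (A^{n'} - A)(l'_{n'} - l'_1) ≤ δ(A - 1)(A^{n'} - A + 1)`, which is the first bound;
the second follows from `A^{n'} ≤ A^{n-1}` and `δ(A - 1)² > 0`.
-/

open Finset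

theorem Finset.sum_Icc_sub_reflect {G : Type*} [AddCommGroup G] (f : ℕ → G) {m : ℕ}
    (hm : 1 ≤ m) :
    ∑ k ∈ Icc 1 (m - 1), (f (m - k) - f (m - k + 1)) = f 1 - f m := by
  have hIcc : Icc 1 (m - 1) = Ico 1 m := by
    rw [← Ico_add_one_right_eq_Icc, Nat.sub_add_cancel hm]
  have hreflect := sum_Ico_reflect (fun j ↦ f j - f (j + 1)) 1 (Nat.le_succ m)
  simp only [Nat.add_sub_cancel_left, Nat.add_sub_cancel] at hreflect
  rw [hIcc, hreflect, ← neg_sub, ← sum_Ico_sub f hm, ← sum_neg_distrib]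
  simp only [neg_sub]

theorem sum_Icc_pow_mul_sub_le {A : ℝ} (hA : 1 ≤ A) {m : ℕ} (hm : 1 ≤ m) {l : ℕ → ℝ}
    (hl : MonotoneOn l (Set.Icc 1 m)) :
    ∑ k ∈ Icc 1 (m - 1), A ^ k * (l (m - k) - l (m - k + 1)) ≤ A * (l 1 - l m) := by
  calc ∑ k ∈ Icc 1 (m - 1), A ^ k * (l (m - k) - l (m - k + 1))
      ≤ ∑ k ∈ Icc 1 (m - 1), A * (l (m - k) - l (m - k + 1)) := by
        refine sum_le_sum fun k hk ↦ ?_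
        obtain ⟨hk1, hkm⟩ := mem_Icc.mp hk
        refine mul_le_mul_of_nonpos_right (le_self_pow₀ hA (by omega)) (sub_nonpos.mpr ?_)
        exact hl ⟨by omega, by omega⟩ ⟨by omega, by omega⟩ (by omega)
    _ = A * (l 1 - l m) := by rw [← mul_sum, sum_Icc_sub_reflect l hm]

theorem add_sum_pow_mul_sub_le {A : ℝ} (hA : 1 ≤ A) {m : ℕ} (hm : 1 ≤ m) {l : ℕ → ℝ}
    (hl : MonotoneOn l (Set.Icc 1 m)) {M : ℝ} (hl1 : 0 ≤ l 1) (hlm : l m ≤ M) :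
    l m + ∑ k ∈ Icc 1 (m - 1), A ^ k * (l (m - k) - l (m - k + 1)) + A ^ m * (l m - l 1)
      ≤ M * (A ^ m - A + 1) := by
  have hAm : A ≤ A ^ m := le_self_pow₀ hA (by omega)
  calc l m + ∑ k ∈ Icc 1 (m - 1), A ^ k * (l (m - k) - l (m - k + 1)) + A ^ m * (l m - l 1)
      ≤ l m + A * (l 1 - l m) + A ^ m * (l m - l 1) := by
        gcongr
        exact sum_Icc_pow_mul_sub_le hA hm hl
    _ = l m + (A ^ m - A) * (l m - l 1) := by ring
    _ ≤ M + (A ^ m - A) * M := by gcongr; linarith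
    _ = M * (A ^ m - A + 1) := by ring

theorem inv_pow_eq_of_mul_eq_one {δ x : ℝ} (h : δ * x = 1) (d : ℕ) : (δ ^ d)⁻¹ = x ^ d :=
  inv_eq_of_mul_eq_one_right (by rw [← mul_pow, h, one_pow])

theorem mul_pow_sub_sq_lt {δ A : ℝ} (hδ : 0 < δ) (hA : 1 < A) {a b : ℕ} (hab : a ≤ b) :
    δ * A ^ a * (A - 1) - δ * (A - 1) ^ 2 < δ * A ^ b * (A - 1) := by
  have hA1 : 0 < A - 1 := sub_pos.mpr hA
  have hsq : 0 < δ * (A - 1) ^ 2 := by positivity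
  have hpow_le : δ * A ^ a * (A - 1) ≤ δ * A ^ b * (A - 1) := by
    gcongr
    exact hA.le
  linarith

theorem stmt_19_general (d n n' N : ℕ) (hd : 1 ≤ d)
    (hn'1 : 1 ≤ n') (hn'2 : n' ≤ n - 1) (δ : ℝ)
    (hδ0 : 0 < δ) (hδhalf : δ ≤ 1 / 2) (hδN : δ * N = 1)
    (l : ℕ → ℝ)
    (hmono : ∀ j j' : ℕ, 1 ≤ j → j < j' → j' ≤ n' → l j < l j')
    (hgrid : ∀ j : ℕ, 1 ≤ j → j ≤ n' → ∃ k : ℕ, k < N ^ d ∧ l j = (k : ℝ) * δ) :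
    let lt : ℝ :=
      l n' + (∑ k ∈ Finset.Icc 1 (n' - 1), (δ ^ (k * d))⁻¹ * (l (n' - k) - l (n' - k + 1)))
        + (δ ^ (n' * d))⁻¹ * (l n' - l 1)
    lt ≤ δ * (δ ^ (n' * d))⁻¹ * ((δ ^ d)⁻¹ - 1) - δ * ((δ ^ d)⁻¹ - 1) ^ 2 ∧
    δ * (δ ^ (n' * d))⁻¹ * ((δ ^ d)⁻¹ - 1) - δ * ((δ ^ d)⁻¹ - 1) ^ 2
      < δ * (δ ^ ((n - 1) * d))⁻¹ * ((δ ^ d)⁻¹ - 1) := by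
  intro lt
  set A : ℝ := (δ ^ d)⁻¹ with hA_def
  have hpow (k : ℕ) : (δ ^ (k * d))⁻¹ = A ^ k := by rw [mul_comm, pow_mul, inv_pow]
  have hN : (2 : ℝ) ≤ N := by nlinarith
  have hA : 1 < A := by
    rw [hA_def, inv_pow_eq_of_mul_eq_one hδN]
    exact one_lt_pow₀ (by linarith) (by omega)
  have hgrid_bounds (j : ℕ) (hj1 : 1 ≤ j) (hjn : j ≤ n') : 0 ≤ l j ∧ l j ≤ δ * (A - 1) := by
    obtain ⟨k, hk, hlk⟩ := hgrid j hj1 hjn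
    have hk' : (k : ℝ) + 1 ≤ A := by
      rw [hA_def, inv_pow_eq_of_mul_eq_one hδN]
      exact_mod_cast hk
    rw [hlk]
    constructor <;> nlinarith
  have hstrict : StrictMonoOn l (Set.Icc 1 n') := fun a ha b hb hab ↦ hmono a b ha.1 hab hb.2
  simp only [lt, hpow]
  exact ⟨(add_sum_pow_mul_sub_le hA.le hn'1 hstrict.monotoneOn (hgrid_bounds 1 le_rfl hn'1).1
      (hgrid_bounds n' hn'1 le_rfl).2).trans_eq (by ring),
    mul_pow_sub_sq_lt hδ0 hA hn'2⟩

/-- For `1 ≤ n' ≤ n − 1` and strictly increasing grid values `l'_1 < … < l'_{n'}` in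
`{0, δ, …, δ^{−d+1} − δ}` (with `δ = 1/N ≤ 1/2`), the quantity
`l̃ = l'_{n'} + Σ_{k=1}^{n'−1} δ^{−kd}(l'_{n'−k} − l'_{n'−k+1}) + δ^{−n'd}(l'_{n'} − l'_1)`
satisfies `l̃ ≤ δ^{−n'd+1}(δ^{−d} − 1) − δ(δ^{−d} − 1)² < δ^{−(n−1)d+1}(δ^{−d} − 1)`,
the latter being a lower bound for the corresponding quantity from `n` strictly
increasing grid values. -/
theorem stmt_19 (d n n' N : ℕ) (hd : 1 ≤ d) (hn : 2 ≤ n)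
    (hn'1 : 1 ≤ n') (hn'2 : n' ≤ n - 1) (δ : ℝ)
    (hδ0 : 0 < δ) (hδhalf : δ ≤ 1 / 2) (hδN : δ * N = 1)
    (l : ℕ → ℝ)
    (hmono : ∀ j j' : ℕ, 1 ≤ j → j < j' → j' ≤ n' → l j < l j')
    (hgrid : ∀ j : ℕ, 1 ≤ j → j ≤ n' → ∃ k : ℕ, k < N ^ d ∧ l j = (k : ℝ) * δ) :
    let lt : ℝ :=
      l n' + (∑ k ∈ Finset.Icc 1 (n' - 1), (δ ^ (k * d))⁻¹ * (l (n' - k) - l (n' - k + 1)))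
        + (δ ^ (n' * d))⁻¹ * (l n' - l 1)
    lt ≤ δ * (δ ^ (n' * d))⁻¹ * ((δ ^ d)⁻¹ - 1) - δ * ((δ ^ d)⁻¹ - 1) ^ 2 ∧
    δ * (δ ^ (n' * d))⁻¹ * ((δ ^ d)⁻¹ - 1) - δ * ((δ ^ d)⁻¹ - 1) ^ 2
      < δ * (δ ^ ((n - 1) * d))⁻¹ * ((δ ^ d)⁻¹ - 1) :=
  stmt_19_general d n n' N hd hn'1 hn'2 δ hδ0 hδhalf hδN l hmono hgrid
end
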